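/- arXiv:1808.07828 — 5 statements merged into one kernel-verified Lean document; each statement's English description precedes it below -/
import Mathlib

section
/- Let G be a group and a ∈ G. Define χ^a on the morphisms of the groupoid Γ (objects: elements of G; morphisms (u,v) : v⁻¹u ⟶ uv⁻¹) by: χ^a(φ) = 1 if the source of φ is a and target is not a; χ^a(φ) = -1 if the target of φ is a and source is not a; χ^a(φ) = 0 otherwise. Then χ^a is an additive character on Γ: χ^a(φ ≫ ψ) = χ^a(φ) + χ^a(ψ) for all composable φ, ψ. -/
open scoped Classical in
theorem stmt11 {G : Type*} [Group G] (a : G)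
    (χ : G × G → ℂ)
    (hχ : ∀ p : G × G, χ p =
      if p.2⁻¹ * p.1 = a ∧ p.1 * p.2⁻¹ ≠ a then 1
      else if p.1 * p.2⁻¹ = a ∧ p.2⁻¹ * p.1 ≠ a then -1 else 0) :
    ∀ u₁ v₁ u₂ v₂ : G, u₁ * v₁⁻¹ = v₂⁻¹ * u₂ →
      χ (u₂ * v₁, v₂ * v₁) = χ (u₁, v₁) + χ (u₂, v₂) := by
  intro u₁ v₁ u₂ v₂ h
  rw [hχ, hχ, hχ]
  have hs : (v₂ * v₁)⁻¹ * (u₂ * v₁) = v₁⁻¹ * u₁ := by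
    have : v₂⁻¹ * u₂ = u₁ * v₁⁻¹ := h.symm
    rw [mul_inv_rev, mul_assoc, ← mul_assoc v₂⁻¹, this]
    group
  have ht : (u₂ * v₁) * (v₂ * v₁)⁻¹ = u₂ * v₂⁻¹ := by group
  simp only [hs, ht]
  rw [h]
  split_ifs <;> norm_num <;> tauto
end

section
/- Let G be a group, d a derivation of ℂ[G] with coefficient function χ_d (χ_d(h,g) = coefficient of h in d(g)), and a ∈ G. Suppose b ∈ G and z ∈ G commutes with b. Then χ_d(bz, za) + χ_d(a⁻¹bz, z) = χ_d(bz, az) + χ_d(bza⁻¹, z). -/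
theorem stmt14 {G : Type*} [Group G]
    (d : MonoidAlgebra ℂ G →ₗ[ℂ] MonoidAlgebra ℂ G)
    (hd : ∀ x y : MonoidAlgebra ℂ G, d (x * y) = d x * y + x * d y)
    (χ : G → G → ℂ)
    (hχ : ∀ h g : G, χ h g = (d (MonoidAlgebra.of ℂ G g)).coeff h)
    (a b z : G) (hz : z * b = b * z) :
    χ (b * z) (z * a) + χ (a⁻¹ * b * z) z = χ (b * z) (a * z) + χ (b * z * a⁻¹) z := by
  have key : ∀ x y : G, χ (b * z) (x * y) =
      (d (MonoidAlgebra.of ℂ G x)).coeff (b * z * y⁻¹) + (d (MonoidAlgebra.of ℂ G y)).coeff (x⁻¹ * (b * z)) := by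
    intro x y
    rw [hχ, show (MonoidAlgebra.of ℂ G) (x*y) = MonoidAlgebra.of ℂ G x * MonoidAlgebra.of ℂ G y from map_mul _ x y, hd, MonoidAlgebra.coeff_add, Finsupp.add_apply]
    rw [show (MonoidAlgebra.of ℂ G y : MonoidAlgebra ℂ G) = MonoidAlgebra.single y 1 from rfl,
        show (MonoidAlgebra.of ℂ G x : MonoidAlgebra ℂ G) = MonoidAlgebra.single x 1 from rfl,
        MonoidAlgebra.mul_single_apply, MonoidAlgebra.single_mul_apply]
    ring
  have h1 := key z a
  have h2 := key a z
  have e1 : b * z * a⁻¹ = (b * z * a⁻¹ : G) := rfl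
  have e2 : z⁻¹ * (b * z) = b := by
    rw [← hz]; group
  have e3 : b * z * z⁻¹ = b := by group
  rw [h1, h2, e2, e3, ← hχ, ← hχ, ← hχ]
  have e4 : a⁻¹ * b * z = a⁻¹ * (b * z) := by group
  rw [e4]
  ring
end

section
/- Let G be a connected groupoid, X₀ the space of all functions Obj(G) → ℂ, X₁ the space of additive characters on morphisms of G, and X₂ the space of functions on pairs of parallel morphisms (f, g : a ⟶ b) which are 'additive' in the sense that ν((f,g) composed horizontally) = ν(f,g) + ν(f',g') and ν((f,g) composed vertically) = ν(f,g) + ν(g,h). Define φ₀ : ℂ → X₀ by constants, φ₁ : X₀ → X₁ by φ₁(χ)(f) = χ(target f) - χ(source f), and φ₂ : X₁ → X₂ by φ₂(χ)(f,g) = χ(g) - χ(f). Then the sequence 0 → ℂ → X₀ → X₁ → X₂ is exact at ℂ, at X₀, and at X₁: φ₀ is injective, ker φ₁ = image φ₀ (constants), and ker φ₂ = image φ₁ (characters trivial on loops). -/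
open CategoryTheory

theorem stmt17 {G : Type*} [Groupoid G] [Nonempty G]
    (hconn : ∀ a b : G, Nonempty (a ⟶ b)) :
    -- exactness at ℂ : φ₀ (constants) is injective
    (∀ z w : ℂ, (fun _ : G => z) = (fun _ : G => w) → z = w) ∧
    -- exactness at X₀ : ker φ₁ = image φ₀ (the constant functions)
    (∀ χ₀ : G → ℂ,
      (∀ (a b : G) (_ : a ⟶ b), χ₀ b - χ₀ a = 0) ↔ (∃ z : ℂ, ∀ x : G, χ₀ x = z)) ∧
    -- exactness at X₁ : ker φ₂ = image φ₁
    (∀ χ : ∀ a b : G, (a ⟶ b) → ℂ,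
      (∀ (a b c : G) (f : a ⟶ b) (g : b ⟶ c), χ a c (f ≫ g) = χ a b f + χ b c g) →
      ((∀ (a b : G) (f g : a ⟶ b), χ a b g - χ a b f = 0) ↔
        (∃ χ₀ : G → ℂ, ∀ (a b : G) (f : a ⟶ b), χ a b f = χ₀ b - χ₀ a))) := by
  obtain ⟨x₀⟩ := ‹Nonempty G›
  refine ⟨fun z w h => congrFun h x₀, ?_, ?_⟩
  · intro χ₀
    constructor
    · intro h
      refine ⟨χ₀ x₀, fun x => ?_⟩
      have := h x₀ x (hconn x₀ x).some
      linear_combination this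
    · rintro ⟨z, hz⟩ a b _
      simp [hz]
  · intro χ hχ
    constructor
    · intro h
      refine ⟨fun x => χ x₀ x (hconn x₀ x).some, fun a b f => ?_⟩
      have h1 := hχ x₀ a b (hconn x₀ a).some f
      have h2 := h x₀ b (hconn x₀ b).some ((hconn x₀ a).some ≫ f)
      rw [h1] at h2
      linear_combination h2
    · rintro ⟨χ₀, hχ₀⟩ a b f g
      rw [hχ₀, hχ₀]; ring
end

section
/- Let G be a connected groupoid. Define φ₂ : X₁ → X₂ as above (φ₂(χ)(f,g) = χ(g) - χ(f) for parallel morphisms f, g). Then φ₂ is surjective onto the space X₂ of 2-characters: for every 2-character ν (a function on pairs of parallel morphisms satisfying ν(f,h) = ν(f,g) + ν(g,h) for f,g,h parallel, and ν(f≫f', g≫g') = ν(f,g) + ν(f',g')), there exists an additive character χ on morphisms of G with χ(g) - χ(f) = ν(f,g) for all parallel f, g. -/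
open CategoryTheory

theorem stmt18 {G : Type*} [Groupoid G]
    (hconn : ∀ a b : G, Nonempty (a ⟶ b))
    (ν : ∀ a b : G, (a ⟶ b) → (a ⟶ b) → ℂ)
    (hvert : ∀ (a b : G) (f g h : a ⟶ b), ν a b f h = ν a b f g + ν a b g h)
    (hhor : ∀ (a b c : G) (f g : a ⟶ b) (f' g' : b ⟶ c),
      ν a c (f ≫ f') (g ≫ g') = ν a b f g + ν b c f' g') :
    ∃ χ : ∀ a b : G, (a ⟶ b) → ℂ,
      (∀ (a b c : G) (f : a ⟶ b) (g : b ⟶ c), χ a c (f ≫ g) = χ a b f + χ b c g) ∧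
      (∀ (a b : G) (f g : a ⟶ b), χ a b g - χ a b f = ν a b f g) := by
  by_cases hG : Nonempty G
  · obtain ⟨o⟩ := hG
    have hself : ∀ (a b : G) (f : a ⟶ b), ν a b f f = 0 := fun a b f =>
      left_eq_add.mp (hvert a b f f f)
    let s : ∀ a : G, (o ⟶ a) := fun a => (hconn o a).some
    let r : ∀ a b : G, (a ⟶ b) := fun a b => Groupoid.inv (s a) ≫ s b
    refine ⟨fun a b f => ν a b (r a b) f, ?_, ?_⟩
    · intro a b c f g
      have hr : r a c = r a b ≫ r b c := by
        simp [r, Groupoid.inv_eq_inv]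
      show ν a c (r a c) (f ≫ g) = _
      rw [hr, hhor]
    · intro a b f g
      have h1 := hvert a b (r a b) f g
      have h2 := hvert a b f (r a b) g
      have h3 := hvert a b f (r a b) f
      have h0 := hself a b f
      -- from h3: 0 = ν f r + ν r f
      rw [h0] at h3
      linear_combination h3 - h2
  · refine ⟨fun a b f => 0, ?_, ?_⟩ <;> intro a <;> exact absurd ⟨a⟩ hG
end

section
/- Let G be a group and χ an additive character on the groupoid Γ associated to G (objects: elements of G; morphisms (u,v) : v⁻¹u ⟶ uv⁻¹; composition (u₁,v₁) ≫ (u₂,v₂) = (u₂v₁, v₂v₁)). If χ vanishes on all loops and is supported on finitely many conjugacy-class components (in particular if χ is a finite linear combination χ = Σ λ^a χ^a of the elementary characters χ^a), then χ = χ_d for the inner derivation d : x ↦ x·u - u·x of ℂ[G] where u = Σ λ^a a; i.e. the coefficient of h in d(g) equals χ(h, g) for all g, h ∈ G with (h,g) a morphism. -/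
open scoped Classical in
theorem stmt19 {G : Type*} [Group G]
    (χ : G → G → ℂ)  -- χ u v is the value of the character on the morphism (u, v)
    -- χ is an additive character on Γ
    (hadd : ∀ u₁ v₁ u₂ v₂ : G, u₁ * v₁⁻¹ = v₂⁻¹ * u₂ →
      χ (u₂ * v₁) (v₂ * v₁) = χ u₁ v₁ + χ u₂ v₂)
    -- χ vanishes on all loops
    (hloop : ∀ u z : G, z * u = u * z → χ (u * z) z = 0)
    -- χ is a finite linear combination of the elementary characters χ^a
    (lam : G →₀ ℂ)
    (hcomb : ∀ u v : G, χ u v = lam.sum fun a c => c *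
      ((if v⁻¹ * u = a ∧ u * v⁻¹ ≠ a then 1 else if u * v⁻¹ = a ∧ v⁻¹ * u ≠ a then -1 else 0)))
    -- the element u = Σ λ^a a of ℂ[G]
    (U : MonoidAlgebra ℂ G)
    (hU : U = lam.sum fun a c => MonoidAlgebra.single a c)
    -- the inner derivation d : x ↦ x·U - U·x
    (d : MonoidAlgebra ℂ G → MonoidAlgebra ℂ G)
    (hd : ∀ x, d x = x * U - U * x) :
    ∀ h g : G, (d (MonoidAlgebra.of ℂ G g)).coeff h = χ h g := by
  intro h g
  have hU' : ∀ x : G, U.coeff x = lam x := by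
    intro x
    rw [hU, MonoidAlgebra.coeff_finsuppSum, Finsupp.sum_apply]
    simp only [MonoidAlgebra.coeff_single, Finsupp.single_apply]
    rw [Finsupp.sum_ite_eq' lam x fun _ c => c]
    split
    · rfl
    · next hx => exact (Finsupp.notMem_support_iff.mp hx).symm
  have hL : (d (MonoidAlgebra.of ℂ G g)).coeff h = lam (g⁻¹ * h) - lam (h * g⁻¹) := by
    rw [hd, MonoidAlgebra.coeff_sub, Finsupp.sub_apply]
    simp [MonoidAlgebra.of_apply, MonoidAlgebra.coeff_single_mul_apply,
      MonoidAlgebra.coeff_mul_single_apply, hU']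
  rw [hL, hcomb]
  by_cases hc : g⁻¹ * h = h * g⁻¹
  · have hz : (lam.sum fun a c => c *
        ((if g⁻¹ * h = a ∧ h * g⁻¹ ≠ a then 1 else
          if h * g⁻¹ = a ∧ g⁻¹ * h ≠ a then (-1 : ℂ) else 0))) = 0 := by
      apply Finset.sum_eq_zero
      intro a _
      rw [hc]
      simp
    rw [hz, hc, sub_self]
  · have hsplit : ∀ a : G, ∀ c : ℂ, c *
        ((if g⁻¹ * h = a ∧ h * g⁻¹ ≠ a then 1 else
          if h * g⁻¹ = a ∧ g⁻¹ * h ≠ a then (-1 : ℂ) else 0)) =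
        (if a = g⁻¹ * h then c else 0) + (if a = h * g⁻¹ then -c else 0) := by
      intro a c
      rcases eq_or_ne (g⁻¹ * h) a with h1 | h1
      · subst h1
        simp [hc, Ne.symm hc]
      · rcases eq_or_ne (h * g⁻¹) a with h2 | h2
        · subst h2
          simp [h1, Ne.symm h1]
        · simp [h1, h2, Ne.symm h1, Ne.symm h2]
    have hrw : (lam.sum fun a c => c *
        ((if g⁻¹ * h = a ∧ h * g⁻¹ ≠ a then 1 else
          if h * g⁻¹ = a ∧ g⁻¹ * h ≠ a then (-1 : ℂ) else 0))) =
        lam.sum fun a c => (if a = g⁻¹ * h then c else 0) + (if a = h * g⁻¹ then -c else 0) :=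
      Finsupp.sum_congr fun a _ => hsplit a (lam a)
    rw [hrw, Finsupp.sum_add, Finsupp.sum_ite_eq' lam (g⁻¹ * h) fun _ c => c,
      Finsupp.sum_ite_eq' lam (h * g⁻¹) fun _ c => -c]
    have e1 : (if g⁻¹ * h ∈ lam.support then lam (g⁻¹ * h) else 0) = lam (g⁻¹ * h) := by
      split
      · rfl
      · next hx => exact (Finsupp.notMem_support_iff.mp hx).symm
    have e2 : (if h * g⁻¹ ∈ lam.support then -lam (h * g⁻¹) else 0) = -lam (h * g⁻¹) := by
      split
      · rfl
      · next hx => rw [Finsupp.notMem_support_iff.mp hx, neg_zero]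
    rw [e1, e2, sub_eq_add_neg]
end
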